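/- arXiv:2508.02688 — 4 statements merged into one kernel-verified Lean document; each statement's English description precedes it below -/
import Mathlib

section
/- Let β be a non-real complex root of X³ − X² − 1 and set b = β²/(β³ + 2). Then 0.278 < |b| < 0.279. In particular, with a = α²/(α³ + 2) where α is the unique real root of X³ − X² − 1, one has max{|a|, |b|} < 1/2. -/
/-!
Write β = x + iy with y ≠ 0. The imaginary part of β³ - β² - 1 = 0 gives y² = 3x² - 2x, and then
the real part gives 8x³ - 8x² + 2x + 1 = 0, whose only real root is x ≈ -0.232786. Since
β³ + 2 = β² + 3, substituting y² and reducing modulo the cubic in x collapses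
|b|² = |β|⁴ / |β² + 3|² to -2x / (9 + 10x - 12x²) ≈ 0.07731, and 0.278² < 0.07731 < 0.279².
For the real root, α²(α - 1) = 1 forces α² < 3, i.e. α² / (α² + 3) < 1/2.
-/

lemma cube_add_two_eq_of_root {R : Type*} [CommRing R] {z : R} (h : z ^ 3 - z ^ 2 - 1 = 0) :
    z ^ 3 + 2 = z ^ 2 + 3 := by
  linear_combination h

lemma sq_lt_three_of_root {a : ℝ} (h : a ^ 3 - a ^ 2 - 1 = 0) : a ^ 2 < 3 := by
  nlinarith [sq_nonneg (a - 1), sq_nonneg (a + 1)]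

lemma abs_div_cube_add_two_lt_half_of_root {a : ℝ} (h : a ^ 3 - a ^ 2 - 1 = 0) :
    |a ^ 2 / (a ^ 3 + 2)| < 1 / 2 := by
  have hden : 0 < a ^ 2 + 3 := by positivity
  rw [cube_add_two_eq_of_root h, abs_of_nonneg (by positivity), div_lt_iff₀ hden]
  linarith [sq_lt_three_of_root h]

namespace Complex

variable {z : ℂ}

lemma im_sq_eq_of_root (h : z ^ 3 - z ^ 2 - 1 = 0) (him : z.im ≠ 0) :
    z.im ^ 2 = 3 * z.re ^ 2 - 2 * z.re := by
  have h_im := congrArg im h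
  simp only [pow_succ, pow_zero, one_mul, mul_im, mul_re, sub_im, one_im, zero_im] at h_im
  have : z.im * (3 * z.re ^ 2 - 2 * z.re - z.im ^ 2) = 0 := by linear_combination h_im
  linarith [(mul_eq_zero.mp this).resolve_left him]

lemma re_cubic_of_root (h : z ^ 3 - z ^ 2 - 1 = 0) (him : z.im ≠ 0) :
    8 * z.re ^ 3 - 8 * z.re ^ 2 + 2 * z.re + 1 = 0 := by
  have h_re := congrArg re h
  simp only [pow_succ, pow_zero, one_mul, mul_im, mul_re, sub_re, one_re, zero_re] at h_re
  linear_combination -h_re - (3 * z.re - 1) * im_sq_eq_of_root h him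

lemma sq_norm_sq_div_cube_add_two_of_root (h : z ^ 3 - z ^ 2 - 1 = 0) (him : z.im ≠ 0) :
    ‖z ^ 2 / (z ^ 3 + 2)‖ ^ 2 = -2 * z.re / (9 + 10 * z.re - 12 * z.re ^ 2) := by
  have hy := im_sq_eq_of_root h him
  have hx := re_cubic_of_root h him
  set x := z.re
  set y := z.im
  rw [cube_add_two_eq_of_root h, Complex.sq_norm, normSq_div, map_pow, normSq_apply, normSq_apply]
  simp only [pow_succ, pow_zero, one_mul, mul_im, mul_re, add_re, add_im, re_ofNat, im_ofNat]
  congr 1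
  · linear_combination (x ^ 2 + y ^ 2 + 4 * x ^ 2 - 2 * x) * hy + 2 * x * hx
  · linear_combination (2 * x ^ 2 - 6 + y ^ 2 + 3 * x ^ 2 - 2 * x) * hy + 2 * x * hx

end Complex

lemma mem_Ioo_of_cubic_eq_zero {x : ℝ} (hx : 8 * x ^ 3 - 8 * x ^ 2 + 2 * x + 1 = 0) :
    x ∈ Set.Ioo (-0.23279) (-0.23278) := by
  constructor
  · nlinarith [sq_nonneg (x + 0.23279), sq_nonneg (x - 0.4), sq_nonneg x]
  · nlinarith [sq_nonneg (x - 0.61639), sq_nonneg (x - 0.6), sq_nonneg x]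

lemma sq_bounds_of_mem_Ioo {x : ℝ} (hx : x ∈ Set.Ioo (-0.23279) (-0.23278)) :
    0.278 ^ 2 < -2 * x / (9 + 10 * x - 12 * x ^ 2) ∧
      -2 * x / (9 + 10 * x - 12 * x ^ 2) < 0.279 ^ 2 := by
  obtain ⟨hlo, hhi⟩ := hx
  have hden : 0 < 9 + 10 * x - 12 * x ^ 2 := by nlinarith
  rw [lt_div_iff₀ hden, div_lt_iff₀ hden]
  constructor <;> nlinarith [mul_pos (sub_pos.2 hlo) (sub_pos.2 hhi)]

theorem abs_b_bounds (α : ℝ) (hα : α ^ 3 - α ^ 2 - 1 = 0)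
    (β : ℂ) (hβ : β ^ 3 - β ^ 2 - 1 = 0) (hβim : β.im ≠ 0) :
    0.278 < ‖β ^ 2 / (β ^ 3 + 2)‖ ∧
    ‖β ^ 2 / (β ^ 3 + 2)‖ < 0.279 ∧
    max |α ^ 2 / (α ^ 3 + 2)| (‖β ^ 2 / (β ^ 3 + 2)‖) < 1 / 2 := by
  obtain ⟨hlo, hhi⟩ :=
    sq_bounds_of_mem_Ioo (mem_Ioo_of_cubic_eq_zero (Complex.re_cubic_of_root hβ hβim))
  rw [← Complex.sq_norm_sq_div_cube_add_two_of_root hβ hβim] at hlo hhi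
  have hb_lo : 0.278 < ‖β ^ 2 / (β ^ 3 + 2)‖ := lt_of_pow_lt_pow_left₀ 2 (norm_nonneg _) hlo
  have hb_hi : ‖β ^ 2 / (β ^ 3 + 2)‖ < 0.279 := lt_of_pow_lt_pow_left₀ 2 (by norm_num) hhi
  exact ⟨hb_lo, hb_hi, max_lt (abs_div_cube_add_two_lt_half_of_root hα) (by linarith)⟩
end

section
/- For every integer m ≥ 1, |N_m − a·α^m| < 0.558 · α^{−m/2}, where α is the unique real root of X³ − X² − 1 and a = α²/(α³ + 2). -/
/-- The Narayana's cows sequence: N 0 = 0, N 1 = N 2 = 1, N (m+3) = N (m+2) + N m. -/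
def narayana : ℕ → ℕ
  | 0 => 0
  | 1 => 1
  | 2 => 1
  | m + 3 => narayana (m + 2) + narayana m

/-!
Let β, β̄ be the complex roots of X³ − X² − 1, so that X³ − X² − 1 = (X − α)(X² − (1 − α)X + α⁻¹).
The constant a is exactly the one making E_m = N_m − a α^m a combination of β^m and β̄^m, i.e. a
solution of the recurrence E_{m+2} = (1 − α) E_{m+1} − α⁻¹ E_m. The norm form
Q(x, y) = (y − βx)(y − β̄x) = y² − (1 − α)xy + α⁻¹x² then gets multiplied by |β|² = α⁻¹ at each
step, and since it is positive definite it bounds E_m² by α^{-m} Q(E_0, E_1) / (α⁻¹ − (1 − α)²/4)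
= α^{-m} · 4 / ((α² + 3)(3α + 1)(α − 1)) ≈ 0.3093 α^{-m} < 0.558² α^{-m}.
-/

open Real

def quadForm (s p x y : ℝ) : ℝ := y ^ 2 - s * x * y + p * x ^ 2

section QuadForm

variable {s p : ℝ}

lemma quadForm_step (x y : ℝ) : quadForm s p y (s * y - p * x) = p * quadForm s p x y := by
  unfold quadForm; ring

lemma quadForm_eq_pow_mul {e : ℕ → ℝ} (he : ∀ k, e (k + 2) = s * e (k + 1) - p * e k) (k : ℕ) :
    quadForm s p (e k) (e (k + 1)) = p ^ k * quadForm s p (e 0) (e 1) := by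
  induction k with
  | zero => simp
  | succ k ih => rw [he, quadForm_step, ih, pow_succ]; ring

lemma mul_sq_le_quadForm (x y : ℝ) : (p - s ^ 2 / 4) * x ^ 2 ≤ quadForm s p x y := by
  have : quadForm s p x y = (y - s * x / 2) ^ 2 + (p - s ^ 2 / 4) * x ^ 2 := by
    unfold quadForm; ring
  linarith [sq_nonneg (y - s * x / 2)]

lemma sq_le_pow_mul_of_recurrence {e : ℕ → ℝ} (he : ∀ k, e (k + 2) = s * e (k + 1) - p * e k)
    (hdisc : 0 < p - s ^ 2 / 4) (k : ℕ) :
    e k ^ 2 ≤ p ^ k * (quadForm s p (e 0) (e 1) / (p - s ^ 2 / 4)) := by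
  rw [mul_div_assoc', le_div_iff₀ hdisc, ← quadForm_eq_pow_mul he, mul_comm]
  exact mul_sq_le_quadForm _ _

end QuadForm

lemma rpow_neg_div_two_sq {x : ℝ} (hx : 0 < x) (m : ℕ) : (x ^ (-(m : ℝ) / 2)) ^ 2 = (x⁻¹) ^ m := by
  rw [← rpow_mul_natCast hx.le, inv_pow, ← rpow_natCast, ← rpow_neg hx.le]
  congr 1
  push_cast
  ring

lemma narayana_add_three (k : ℕ) :
    (narayana (k + 3) : ℝ) = narayana (k + 2) + narayana k := by
  rw [narayana]; push_cast; rfl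

noncomputable def narayanaError (α : ℝ) (k : ℕ) : ℝ := narayana k - α ^ 2 / (α ^ 3 + 2) * α ^ k

section NarayanaRoot

variable {α : ℝ} (hα : α ^ 3 - α ^ 2 - 1 = 0)
include hα

lemma one_lt_of_narayana_root : 1 < α := by
  nlinarith [sq_nonneg α, sq_nonneg (α - 1)]

lemma pos_of_narayana_root : 0 < α := one_pos.trans (one_lt_of_narayana_root hα)

lemma inv_eq_of_narayana_root : α⁻¹ = α ^ 2 - α := by
  have := (pos_of_narayana_root hα).ne'
  field_simp
  linear_combination -hα

lemma narayanaError_add_three (k : ℕ) :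
    narayanaError α (k + 3) = narayanaError α (k + 2) + narayanaError α k := by
  unfold narayanaError
  rw [narayana_add_three]
  linear_combination (-(α ^ 2 / (α ^ 3 + 2)) * α ^ k) * hα

lemma narayanaError_add_two (k : ℕ) :
    narayanaError α (k + 2) = (1 - α) * narayanaError α (k + 1) - α⁻¹ * narayanaError α k := by
  rw [inv_eq_of_narayana_root hα]
  have hden : α ^ 3 + 2 ≠ 0 := by linarith [one_lt_of_narayana_root hα, sq_nonneg α]
  induction k with
  | zero =>
    simp only [narayanaError, narayana]
    field_simp
    linear_combination (-2 * α) * hα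
  | succ k ih =>
    rw [narayanaError_add_three hα, ih]
    linear_combination (-narayanaError α k) * hα

lemma quadForm_narayanaError_zero :
    quadForm (1 - α) α⁻¹ (narayanaError α 0) (narayanaError α 1) = 1 / (α ^ 2 + 3) := by
  have := (pos_of_narayana_root hα).ne'
  have hden : α ^ 3 + 2 = α ^ 2 + 3 := by linear_combination hα
  simp only [quadForm, narayanaError, narayana, hden, Nat.cast_zero, Nat.cast_one]
  field_simp
  linear_combination (-4 * α + 2 * α * (α ^ 3 - α ^ 2 - 1)) * hα

lemma narayana_disc_eq : α⁻¹ - (1 - α) ^ 2 / 4 = (3 * α + 1) * (α - 1) / 4 := by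
  rw [inv_eq_of_narayana_root hα]; ring

lemma narayana_disc_pos : 0 < α⁻¹ - (1 - α) ^ 2 / 4 := by
  have := one_lt_of_narayana_root hα
  rw [narayana_disc_eq hα]; nlinarith

lemma narayana_constant_lt : 1 / (α ^ 2 + 3) / (α⁻¹ - (1 - α) ^ 2 / 4) < 0.558 ^ 2 := by
  have h1 := one_lt_of_narayana_root hα
  have hα146 : 1.46 ≤ α := by nlinarith [sq_nonneg (α - 1.46)]
  rw [narayana_disc_eq hα, div_div, div_lt_iff₀ (by positivity)]
  nlinarith

end NarayanaRoot

theorem narayana_error_bound_general (α : ℝ) (hα : α ^ 3 - α ^ 2 - 1 = 0)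
    (m : ℕ) :
    |(narayana m : ℝ) - (α ^ 2 / (α ^ 3 + 2)) * α ^ m|
      < 0.558 * α ^ (-(m : ℝ) / 2) := by
  have hα0 := pos_of_narayana_root hα
  have hsq : narayanaError α m ^ 2 < (0.558 * α ^ (-(m : ℝ) / 2)) ^ 2 := by
    have hbound := sq_le_pow_mul_of_recurrence (narayanaError_add_two hα)
      (narayana_disc_pos hα) m
    rw [quadForm_narayanaError_zero hα] at hbound
    rw [mul_pow, rpow_neg_div_two_sq hα0, mul_comm]
    exact hbound.trans_lt (by gcongr; exact narayana_constant_lt hα)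
  exact abs_lt_of_sq_lt_sq hsq (by positivity)

theorem narayana_error_bound (α : ℝ) (hα : α ^ 3 - α ^ 2 - 1 = 0)
    (m : ℕ) (hm : 1 ≤ m) :
    |(narayana m : ℝ) - (α ^ 2 / (α ^ 3 + 2)) * α ^ m|
      < 0.558 * α ^ (-(m : ℝ) / 2) :=
  narayana_error_bound_general α hα m
end

section
/- Let m, n, k be positive integers with N_m = F_n · F_k. Then (log γ / log α)·(n + k) − 4.1 < m < (log γ / log α)·(n + k) + 0.5, where α is the unique real root of X³ − X² − 1 and γ = (1 + √5)/2. -/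
open Real goldenRatio

namespace LinearRecurrence

section CommSemiring

variable {R : Type*} [CommSemiring R] {E : LinearRecurrence R} {u : ℕ → R}

theorem IsSolution.comp_add (hu : E.IsSolution u) (k : ℕ) :
    E.IsSolution fun n ↦ u (n + k) := fun n ↦ by
  simpa only [add_right_comm] using hu (n + k)

theorem IsSolution.const_mul (hu : E.IsSolution u) (c : R) :
    E.IsSolution fun n ↦ c * u n :=
  (E.is_sol_iff_mem_solSpace _).2 (E.solSpace.smul_mem c ((E.is_sol_iff_mem_solSpace u).1 hu))

end CommSemiring

variable {R : Type*} [CommSemiring R] [PartialOrder R] [IsOrderedRing R] {E : LinearRecurrence R}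

theorem le_of_isSolution (hE : ∀ i, 0 ≤ E.coeffs i) {u v : ℕ → R}
    (hu : E.IsSolution u) (hv : E.IsSolution v) (hinit : ∀ n < E.order, u n ≤ v n) (n : ℕ) :
    u n ≤ v n := by
  induction n using Nat.strong_induction_on with
  | _ n ih =>
    rcases lt_or_ge n E.order with hn | hn
    · exact hinit n hn
    obtain ⟨n, rfl⟩ := Nat.exists_eq_add_of_le' hn
    rw [hu, hv]
    exact Finset.sum_le_sum fun i _ ↦ mul_le_mul_of_nonneg_left (ih _ (by omega)) (hE i)

end LinearRecurrence

section Narayana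

variable {R : Type*} [CommSemiring R]

def narayanaRec : LinearRecurrence R where
  order := 3
  coeffs := ![1, 0, 1]

theorem narayana_isSol_narayanaRec : narayanaRec.IsSolution fun n ↦ (narayana n : R) := by
  intro n
  change (narayana (n + 3) : R) = ∑ i : Fin 3, ![1, 0, 1] i * (narayana (n + i) : R)
  simp [Fin.sum_univ_three, narayana, add_comm]

theorem geom_isSol_narayanaRec {α : R} (hα : α ^ 3 = α ^ 2 + 1) :
    narayanaRec.IsSolution (α ^ ·) := by
  intro n
  change α ^ (n + 3) = ∑ i : Fin 3, ![1, 0, 1] i * α ^ (n + i)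
  simp [Fin.sum_univ_three, pow_add, hα]
  ring

variable [PartialOrder R] [IsOrderedRing R] {α : R}

theorem narayanaRec_coeffs_nonneg (i : Fin 3) :
    0 ≤ (narayanaRec : LinearRecurrence R).coeffs i := by
  fin_cases i <;> simp [narayanaRec]

theorem narayana_succ_le_pow (h1 : 1 ≤ α) (hα : α ^ 3 = α ^ 2 + 1) (m : ℕ) :
    (narayana (m + 1) : R) ≤ α ^ m :=
  LinearRecurrence.le_of_isSolution narayanaRec_coeffs_nonneg
    (narayana_isSol_narayanaRec.comp_add 1) (geom_isSol_narayanaRec hα) (fun n (hn : n < 3) ↦ by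
      interval_cases n <;> simp [narayana, h1, one_le_pow₀ h1]) m

theorem pow_le_sq_mul_narayana_succ (h1 : 1 ≤ α) (hα : α ^ 3 = α ^ 2 + 1) (m : ℕ) :
    α ^ m ≤ α ^ 2 * narayana (m + 1) :=
  LinearRecurrence.le_of_isSolution narayanaRec_coeffs_nonneg (geom_isSol_narayanaRec hα)
    ((narayana_isSol_narayanaRec.comp_add 1).const_mul _) (fun n (hn : n < 3) ↦ by
      interval_cases n <;> simp [narayana, one_le_pow₀ h1, le_self_pow₀ h1]) m

end Narayana

section Fibonacci

theorem fibRec_coeffs_nonneg (i : Fin 2) : 0 ≤ (fibRec : LinearRecurrence ℝ).coeffs i := by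
  fin_cases i <;> simp [fibRec]

theorem fib_succ_le_goldenRatio_pow (n : ℕ) : (Nat.fib (n + 1) : ℝ) ≤ φ ^ n :=
  LinearRecurrence.le_of_isSolution fibRec_coeffs_nonneg (fib_isSol_fibRec.comp_add 1)
    geom_goldenRatio_isSol_fibRec (fun n (hn : n < 2) ↦ by
      interval_cases n <;> simp [one_lt_goldenRatio.le]) n

theorem goldenRatio_pow_le_mul_fib_succ (n : ℕ) : φ ^ n ≤ φ * Nat.fib (n + 1) :=
  LinearRecurrence.le_of_isSolution fibRec_coeffs_nonneg geom_goldenRatio_isSol_fibRec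
    ((fib_isSol_fibRec.comp_add 1).const_mul _) (fun n (hn : n < 2) ↦ by
      interval_cases n <;> simp [one_lt_goldenRatio.le]) n

end Fibonacci

theorem mem_Ioo_of_cubic_eq_zero_s9 {α : ℝ} (hα : α ^ 3 - α ^ 2 - 1 = 0) :
    α ∈ Set.Ioo 1.465 1.466 := by
  have h1 : 1 < α := by nlinarith [sq_nonneg α]
  constructor <;> nlinarith [sq_nonneg α]

theorem goldenRatio_mem_Ioo : φ ∈ Set.Ioo 1.618 1.6185 := by
  have lo : (2.236 : ℝ) < √5 := by rw [Real.lt_sqrt (by norm_num)]; norm_num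
  have hi : √5 < 2.237 := by rw [Real.sqrt_lt' (by norm_num)]; norm_num
  unfold goldenRatio
  constructor <;> linarith

theorem pow_le_sq_mul_goldenRatio_pow_of_narayana_eq {α : ℝ} (h1 : 1 ≤ α)
    (hα : α ^ 3 = α ^ 2 + 1) {m n k : ℕ}
    (hN : (narayana (m + 1) : ℝ) = Nat.fib (n + 1) * Nat.fib (k + 1)) :
    α ^ m ≤ α ^ 2 * φ ^ (n + k) := calc
  α ^ m ≤ α ^ 2 * narayana (m + 1) := pow_le_sq_mul_narayana_succ h1 hα m
  _ ≤ α ^ 2 * (φ ^ n * φ ^ k) := by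
    rw [hN]
    gcongr
    exacts [fib_succ_le_goldenRatio_pow n, fib_succ_le_goldenRatio_pow k]
  _ = α ^ 2 * φ ^ (n + k) := by rw [pow_add]

theorem goldenRatio_pow_le_sq_mul_pow_of_narayana_eq {α : ℝ} (h1 : 1 ≤ α)
    (hα : α ^ 3 = α ^ 2 + 1) {m n k : ℕ}
    (hN : (narayana (m + 1) : ℝ) = Nat.fib (n + 1) * Nat.fib (k + 1)) :
    φ ^ (n + k) ≤ φ ^ 2 * α ^ m := calc
  φ ^ (n + k) ≤ (φ * Nat.fib (n + 1)) * (φ * Nat.fib (k + 1)) := by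
    rw [pow_add]
    gcongr
    exacts [goldenRatio_pow_le_mul_fib_succ n, goldenRatio_pow_le_mul_fib_succ k]
  _ = φ ^ 2 * narayana (m + 1) := by rw [hN]; ring
  _ ≤ φ ^ 2 * α ^ m := by gcongr; exact narayana_succ_le_pow h1 hα m

theorem mul_log_lt_mul_log_of_pow_lt {a b : ℝ} (ha : 0 < a) {p q : ℕ} (h : a ^ p < b ^ q) :
    p * log a < q * log b := by
  have := log_lt_log (pow_pos ha p) h
  rwa [log_pow, log_pow] at this

theorem mul_log_le_of_pow_le_mul_pow {a b c : ℝ} (ha : 0 < a) (hb : 0 < b) (hc : 0 < c)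
    {p q r : ℕ} (h : a ^ p ≤ b ^ q * c ^ r) : p * log a ≤ q * log b + r * log c := by
  have := log_le_log (pow_pos ha p) h
  rwa [log_mul (by positivity) (by positivity), log_pow, log_pow, log_pow] at this

theorem five_mul_log_lt_four_mul_log_goldenRatio {α : ℝ} (hα : α ∈ Set.Ioo 1.465 1.466) :
    5 * log α < 4 * log φ := by
  have h : α ^ 5 < φ ^ 4 := calc
    α ^ 5 < 1.466 ^ 5 := pow_lt_pow_left₀ hα.2 (by linarith [hα.1]) (by norm_num)
    _ < 1.618 ^ 4 := by norm_num
    _ < φ ^ 4 := by gcongr; exact goldenRatio_mem_Ioo.1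
  exact_mod_cast mul_log_lt_mul_log_of_pow_lt (by linarith [hα.1]) h

theorem forty_mul_log_goldenRatio_lt_fiftyOne_mul_log {α : ℝ}
    (hα : α ∈ Set.Ioo 1.465 1.466) :
    40 * log φ < 51 * log α := by
  have h : φ ^ 40 < α ^ 51 := calc
    φ ^ 40 < 1.6185 ^ 40 := by gcongr; exact goldenRatio_mem_Ioo.2
    _ < 1.465 ^ 51 := by norm_num
    _ < α ^ 51 := by gcongr; exact hα.1
  exact_mod_cast mul_log_lt_mul_log_of_pow_lt goldenRatio_pos h

theorem m_bounds (α : ℝ) (hα : α ^ 3 - α ^ 2 - 1 = 0)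
    (m n k : ℕ) (hm : 0 < m) (hn : 0 < n) (hk : 0 < k)
    (h : narayana m = Nat.fib n * Nat.fib k) :
    (Real.log ((1 + Real.sqrt 5) / 2) / Real.log α) * (n + k) - 4.1 < (m : ℝ) ∧
    (m : ℝ) < (Real.log ((1 + Real.sqrt 5) / 2) / Real.log α) * (n + k) + 0.5 := by
  have hαI := mem_Ioo_of_cubic_eq_zero_s9 hα
  have hα1 : 1 < α := by linarith [hαI.1]
  have hα0 : 0 < α := by linarith
  have hα3 : α ^ 3 = α ^ 2 + 1 := by linear_combination hα
  obtain ⟨m, rfl⟩ := Nat.exists_eq_add_one_of_ne_zero hm.ne'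
  obtain ⟨n, rfl⟩ := Nat.exists_eq_add_one_of_ne_zero hn.ne'
  obtain ⟨k, rfl⟩ := Nat.exists_eq_add_one_of_ne_zero hk.ne'
  have hN : (narayana (m + 1) : ℝ) = Nat.fib (n + 1) * Nat.fib (k + 1) := by exact_mod_cast h
  have upper := mul_log_le_of_pow_le_mul_pow hα0 hα0 goldenRatio_pos
    (pow_le_sq_mul_goldenRatio_pow_of_narayana_eq hα1.le hα3 hN)
  have lower := mul_log_le_of_pow_le_mul_pow goldenRatio_pos goldenRatio_pos hα0
    (goldenRatio_pow_le_sq_mul_pow_of_narayana_eq hα1.le hα3 hN)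
  have c₁ := five_mul_log_lt_four_mul_log_goldenRatio hαI
  have c₂ := forty_mul_log_goldenRatio_lt_fiftyOne_mul_log hαI
  push_cast at upper lower ⊢
  constructor
  · rw [div_mul_eq_mul_div, sub_lt_iff_lt_add, div_lt_iff₀ (log_pos hα1)]
    linarith
  · rw [div_mul_eq_mul_div, ← sub_lt_iff_lt_add, lt_div_iff₀ (log_pos hα1)]
    linarith
end

section
/- For all positive integers m and s, 5a·α^m ≠ γ^s, where α is the unique real root of X³ − X² − 1, a = α²/(α³ + 2) and γ = (1 + √5)/2. (Equivalently, the linear form Λ₁ = 5a·α^m·γ^{−s} − 1 never vanishes.) -/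
/-!
Write `φ = (1 + √5) / 2`. Since `φ ^ s = F_s φ + F_{s-1}` with `F_s ≠ 0` for `s > 0`, an equality
`5 a α ^ m = φ ^ s` would put `φ`, hence `√5 = 2 φ - 1`, into the field `ℚ(α)`. But `X³ - X² - 1`
has no rational root, so `[ℚ(α) : ℚ] = 3`, which the degree `[ℚ(√5) : ℚ] = 2` cannot divide.
-/

open Polynomial IntermediateField Module Real goldenRatio

lemma irreducible_X_pow_three_sub_X_pow_two_sub_one :
    Irreducible (X ^ 3 - X ^ 2 - 1 : ℚ[X]) := by
  have hmonic : (X ^ 3 - X ^ 2 - 1 : ℚ[X]).Monic := by monicity!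
  have hdeg : (X ^ 3 - X ^ 2 - 1 : ℚ[X]).natDegree = 3 := by compute_degree!
  rw [hmonic.irreducible_iff_roots_eq_zero_of_degree_le_three (by omega) (by omega)]
  refine Multiset.eq_zero_of_forall_notMem fun r hr => ?_
  rw [mem_roots hmonic.ne_zero, IsRoot.def] at hr
  have hrZ : aeval r (X ^ 3 - X ^ 2 - 1 : ℤ[X]) = 0 := by simpa using hr
  obtain ⟨z, rfl, hz⟩ := exists_integer_of_is_root_of_monic (by monicity!) hrZ
  have hz1 : z ∣ 1 := by simpa using hz
  rcases Int.isUnit_iff.mp (isUnit_of_dvd_one hz1) with rfl | rfl <;> norm_num at hr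

section

variable {L : Type*} [Field L] [Algebra ℚ L]

lemma finrank_adjoin_of_cubic {α : L} (hα : α ^ 3 - α ^ 2 - 1 = 0) : finrank ℚ ℚ⟮α⟯ = 3 := by
  have haeval : aeval α (X ^ 3 - X ^ 2 - 1 : ℚ[X]) = 0 := by simpa using hα
  have hmonic : (X ^ 3 - X ^ 2 - 1 : ℚ[X]).Monic := by monicity!
  rw [adjoin.finrank ⟨_, hmonic, haeval⟩, ← minpoly.eq_of_irreducible_of_monic
    irreducible_X_pow_three_sub_X_pow_two_sub_one haeval hmonic]
  compute_degree!

lemma minpoly_eq_X_pow_two_sub_five {x : L} (hx : x ^ 2 = 5) : minpoly ℚ x = X ^ 2 - C 5 := by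
  have hirr : Irreducible (X ^ 2 - C 5 : ℚ[X]) :=
    X_pow_sub_C_irreducible_of_prime Nat.prime_two fun b hb =>
      (by norm_num : ¬IsSquare (5 : ℚ)) ⟨b, by rw [← hb, sq]⟩
  exact (minpoly.eq_of_irreducible_of_monic hirr (by simp [hx])
    (monic_X_pow_sub_C _ two_ne_zero)).symm

lemma notMem_of_sq_eq_five_of_odd_finrank {x : L} (hx : x ^ 2 = 5) {K : IntermediateField ℚ L}
    (hK : Odd (finrank ℚ K)) : x ∉ K := by
  intro hxK
  have hint : IsIntegral ℚ x := ⟨X ^ 2 - C 5, monic_X_pow_sub_C _ two_ne_zero, by simp [hx]⟩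
  have hdvd := finrank_dvd_of_le_right (adjoin_simple_le_iff.mpr hxK)
  rw [adjoin.finrank hint, minpoly_eq_X_pow_two_sub_five hx, natDegree_X_pow_sub_C] at hdvd
  exact Nat.not_even_iff_odd.mpr hK (even_iff_two_dvd.mpr hdvd)

end

lemma goldenRatio_mem_of_pow_mem {S : Type*} [SetLike S ℝ] [SubfieldClass S ℝ] {K : S} {s : ℕ}
    (hs : s ≠ 0) (h : φ ^ s ∈ K) : φ ∈ K := by
  obtain ⟨n, rfl⟩ := Nat.exists_eq_succ_of_ne_zero hs
  have hfib : (Nat.fib (n + 1) : ℝ) ≠ 0 := by exact_mod_cast (Nat.fib_pos.mpr n.succ_pos).ne'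
  have hφ : φ = (φ ^ (n + 1) - Nat.fib n) / Nat.fib (n + 1) := by
    rw [← goldenRatio_mul_fib_succ_add_fib, eq_div_iff hfib]
    ring
  rw [hφ]
  exact div_mem (sub_mem h (natCast_mem K _)) (natCast_mem K _)

lemma sqrt_five_mem_of_goldenRatio_mem {S : Type*} [SetLike S ℝ] [SubfieldClass S ℝ] {K : S}
    (h : φ ∈ K) : √5 ∈ K := by
  have h5 : √5 = 2 * φ - 1 := by unfold goldenRatio; ring
  rw [h5]
  exact sub_mem (mul_mem (ofNat_mem K 2) h) (one_mem K)

theorem linear_form_one_nonzero_general (α : ℝ) (hα : α ^ 3 - α ^ 2 - 1 = 0)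
    (m s : ℕ) (hs : 0 < s) :
    5 * (α ^ 2 / (α ^ 3 + 2)) * α ^ m ≠ ((1 + Real.sqrt 5) / 2) ^ s := by
  intro h
  have hαK : α ∈ ℚ⟮α⟯ := mem_adjoin_simple_self ℚ α
  have hlhs : 5 * (α ^ 2 / (α ^ 3 + 2)) * α ^ m ∈ ℚ⟮α⟯ :=
    mul_mem (mul_mem (ofNat_mem _ 5) (div_mem (pow_mem hαK 2)
      (add_mem (pow_mem hαK 3) (ofNat_mem _ 2)))) (pow_mem hαK m)
  rw [h] at hlhs
  have hsqrt : √5 ∈ ℚ⟮α⟯ :=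
    sqrt_five_mem_of_goldenRatio_mem (goldenRatio_mem_of_pow_mem hs.ne' hlhs)
  refine notMem_of_sq_eq_five_of_odd_finrank (Real.sq_sqrt (by norm_num)) ?_ hsqrt
  rw [finrank_adjoin_of_cubic hα]
  decide

theorem linear_form_one_nonzero (α : ℝ) (hα : α ^ 3 - α ^ 2 - 1 = 0)
    (m s : ℕ) (hm : 0 < m) (hs : 0 < s) :
    5 * (α ^ 2 / (α ^ 3 + 2)) * α ^ m ≠ ((1 + Real.sqrt 5) / 2) ^ s :=
  linear_form_one_nonzero_general α hα m s hs
end
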